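/- arXiv:1705.03699 — 7 statements merged into one kernel-verified Lean document; each statement's English description precedes it below -/
import Mathlib

section
/- Let (X,d) be a nonempty complete metric space and T a self-mapping of X satisfying: (1) there exists a function ψ : (0,∞) → (0,∞) with ψ(t) < t for each t > 0 such that d(Tx,Ty) ≤ ψ(M₁(x,y)) for all x,y ∈ X with M₁(x,y) > 0; and (2) for every ε > 0 there exists δ > 0 such that for all x,y ∈ X, ε < M₁(x,y) < ε + δ implies d(Tx,Ty) ≤ ε. Then T has a unique fixed point y₀ ∈ X, and for every x ∈ X the sequence of Picard iterates Tⁿx converges to y₀. -/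
/-- The number `M₁(x,y)` associated to a self-mapping `T` of a metric space. -/
noncomputable def M1 {X : Type*} [MetricSpace X] (T : X → X) (x y : X) : ℝ :=
  max (max (max (dist x y) (dist x (T x)))
      (max (dist y (T y)) (dist x (T x) * dist y (T y) / (1 + dist x y))))
    (dist x (T x) * dist y (T y) / (1 + dist (T x) (T y)))

section aux
variable {X : Type*} [MetricSpace X] (T : X → X)

lemma dist_le_M1 (x y : X) : dist x y ≤ M1 T x y :=
  le_max_of_le_left (le_max_of_le_left (le_max_left _ _))

lemma dist_y_le_M1 (x y : X) : dist y (T y) ≤ M1 T x y :=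
  le_max_of_le_left (le_max_of_le_right (le_max_left _ _))

lemma M1_nonneg (x y : X) : 0 ≤ M1 T x y := dist_nonneg.trans (dist_le_M1 T x y)

lemma M1_le_of {x y : X} {c : ℝ} (h1 : dist x y ≤ c) (h2 : dist x (T x) ≤ c)
    (h3 : dist y (T y) ≤ c) (h4 : dist x (T x) * dist y (T y) ≤ c) :
    M1 T x y ≤ c := by
  have hp : 0 ≤ dist x (T x) * dist y (T y) := mul_nonneg dist_nonneg dist_nonneg
  have f1 : dist x (T x) * dist y (T y) / (1 + dist x y) ≤ c :=
    (div_le_self hp (by linarith [dist_nonneg (x := x) (y := y)])).trans h4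
  have f2 : dist x (T x) * dist y (T y) / (1 + dist (T x) (T y)) ≤ c :=
    (div_le_self hp (by linarith [dist_nonneg (x := T x) (y := T y)])).trans h4
  exact max_le (max_le (max_le h1 h2) (max_le h3 f1)) f2

lemma M1_lt_of {x y : X} {c : ℝ} (h1 : dist x y < c) (h2 : dist x (T x) < c)
    (h3 : dist y (T y) < c) (h4 : dist x (T x) * dist y (T y) < c) :
    M1 T x y < c := by
  have hp : 0 ≤ dist x (T x) * dist y (T y) := mul_nonneg dist_nonneg dist_nonneg
  have f1 : dist x (T x) * dist y (T y) / (1 + dist x y) < c :=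
    (div_le_self hp (by linarith [dist_nonneg (x := x) (y := y)])).trans_lt h4
  have f2 : dist x (T x) * dist y (T y) / (1 + dist (T x) (T y)) < c :=
    (div_le_self hp (by linarith [dist_nonneg (x := T x) (y := T y)])).trans_lt h4
  exact max_lt (max_lt (max_lt h1 h2) (max_lt h3 f1)) f2

lemma M1_self (x : X) :
    M1 T x (T x) = max (dist x (T x)) (dist (T x) (T (T x))) := by
  set a := dist x (T x) with ha
  set b := dist (T x) (T (T x)) with hb
  have ha0 : 0 ≤ a := dist_nonneg
  have hb0 : 0 ≤ b := dist_nonneg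
  have f1 : a * b / (1 + a) ≤ b := by
    rw [div_le_iff₀ (by linarith)]; nlinarith
  have f2 : a * b / (1 + b) ≤ a := by
    rw [div_le_iff₀ (by linarith)]; nlinarith
  show max (max (max a a) (max b (a * b / (1 + a)))) (a * b / (1 + b)) = max a b
  apply le_antisymm
  · exact max_le (max_le (max_le (le_max_left _ _) (le_max_left _ _))
      (max_le (le_max_right _ _) (f1.trans (le_max_right _ _)))) (f2.trans (le_max_left _ _))
  · exact max_le (le_max_of_le_left (le_max_of_le_left (le_max_left _ _)))
      (le_max_of_le_left (le_max_of_le_right (le_max_left _ _)))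

variable (ψ : ℝ → ℝ)

lemma step_le (hψ : ∀ t > (0 : ℝ), 0 < ψ t ∧ ψ t < t)
    (h1 : ∀ x y : X, 0 < M1 T x y → dist (T x) (T y) ≤ ψ (M1 T x y)) (x : X) :
    dist (T x) (T (T x)) ≤ dist x (T x) := by
  by_contra h
  push_neg at h
  have hM : M1 T x (T x) = dist (T x) (T (T x)) := by
    rw [M1_self]; exact max_eq_right h.le
  have pos : 0 < M1 T x (T x) := by
    rw [hM]; linarith [dist_nonneg (x := x) (y := T x)]
  have := (h1 x (T x) pos).trans_lt (hψ _ pos).2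
  rw [hM] at this
  exact absurd this (lt_irrefl _)

lemma step_lt (hψ : ∀ t > (0 : ℝ), 0 < ψ t ∧ ψ t < t)
    (h1 : ∀ x y : X, 0 < M1 T x y → dist (T x) (T y) ≤ ψ (M1 T x y)) (x : X)
    (hx : 0 < dist x (T x)) : dist (T x) (T (T x)) < dist x (T x) := by
  have hM : M1 T x (T x) = dist x (T x) := by
    rw [M1_self]; exact max_eq_left (step_le T ψ hψ h1 x)
  have pos : 0 < M1 T x (T x) := hM ▸ hx
  have := (h1 x (T x) pos).trans_lt (hψ _ pos).2
  rwa [hM] at this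

lemma contract (hψ : ∀ t > (0 : ℝ), 0 < ψ t ∧ ψ t < t)
    (h1 : ∀ x y : X, 0 < M1 T x y → dist (T x) (T y) ≤ ψ (M1 T x y))
    {ε δ : ℝ} (hε : 0 < ε)
    (hδ : ∀ x y : X, ε < M1 T x y → M1 T x y < ε + δ → dist (T x) (T y) ≤ ε)
    (x y : X) (hM : M1 T x y < ε + δ) : dist (T x) (T y) ≤ ε := by
  rcases lt_or_ge ε (M1 T x y) with h | h
  · exact hδ x y h hM
  · rcases (M1_nonneg T x y).lt_or_eq with h0 | h0
    · exact ((h1 x y h0).trans_lt (hψ _ h0).2).le.trans h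
    · have hxy : x = y :=
        dist_le_zero.mp ((dist_le_M1 T x y).trans h0.symm.le)
      rw [hxy, dist_self]
      exact hε.le

lemma uniq (hψ : ∀ t > (0 : ℝ), 0 < ψ t ∧ ψ t < t)
    (h1 : ∀ x y : X, 0 < M1 T x y → dist (T x) (T y) ≤ ψ (M1 T x y))
    (y z : X) (hy : T y = y) (hz : T z = z) : z = y := by
  by_contra h
  have hd : 0 < dist z y := dist_pos.mpr h
  have hM : M1 T z y = dist z y := by
    apply le_antisymm
    · apply M1_le_of <;> simp [hz, hy, dist_nonneg]
    · exact dist_le_M1 T z y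
  have h2 := (h1 z y (hM ▸ hd)).trans_lt (hψ _ (hM ▸ hd)).2
  rw [hM, hz, hy] at h2
  exact absurd h2 (lt_irrefl _)

lemma picard [CompleteSpace X] (hψ : ∀ t > (0 : ℝ), 0 < ψ t ∧ ψ t < t)
    (h1 : ∀ x y : X, 0 < M1 T x y → dist (T x) (T y) ≤ ψ (M1 T x y))
    (h2 : ∀ ε > (0 : ℝ), ∃ δ > (0 : ℝ), ∀ x y : X,
      ε < M1 T x y → M1 T x y < ε + δ → dist (T x) (T y) ≤ ε) (x₀ : X) :
    ∃ y : X, Filter.Tendsto (fun n : ℕ => T^[n] x₀) Filter.atTop (nhds y) ∧ T y = y := by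
  set u : ℕ → X := fun n => T^[n] x₀ with hudef
  have hu : ∀ n, u (n + 1) = T (u n) := fun n => Function.iterate_succ_apply' T n x₀
  set d : ℕ → ℝ := fun n => dist (u n) (u (n + 1)) with hddef
  have hd0 : ∀ n, 0 ≤ d n := fun n => dist_nonneg
  have hdsucc : ∀ n, d (n + 1) = dist (T (u n)) (T (T (u n))) := by
    intro n
    show dist (u (n + 1)) (u (n + 2)) = _
    rw [show u (n + 2) = T (u (n + 1)) from hu (n + 1), hu n]
  have hdx : ∀ n, d n = dist (u n) (T (u n)) := by
    intro n; show dist (u n) (u (n + 1)) = _; rw [hu n]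
  have hd_anti : ∀ n, d (n + 1) ≤ d n := by
    intro n
    rw [hdsucc n, hdx n]
    exact step_le T ψ hψ h1 (u n)
  have hbdd : BddBelow (Set.range d) := ⟨0, by rintro _ ⟨n, rfl⟩; exact hd0 n⟩
  have hanti : Antitone d := antitone_nat_of_succ_le hd_anti
  have htend : Filter.Tendsto d Filter.atTop (nhds (⨅ n, d n)) :=
    tendsto_atTop_ciInf hanti hbdd
  have hrn : ∀ n, (⨅ n, d n) ≤ d n := fun n => ciInf_le hbdd n
  have hr0 : (0 : ℝ) ≤ ⨅ n, d n := le_ciInf hd0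
  have hreq : (⨅ n, d n) = 0 := by
    by_contra hne
    have hrpos : 0 < ⨅ n, d n := hr0.lt_of_ne (Ne.symm hne)
    set r := ⨅ n, d n with hrdef
    obtain ⟨δ, hδpos, hδ⟩ := h2 r hrpos
    have hlt : ∀ n, r < d n := by
      intro n
      rcases (hrn n).lt_or_eq with h | h
      · exact h
      · exfalso
        have hpos : 0 < d n := h ▸ hrpos
        have := step_lt T ψ hψ h1 (u n) (by rwa [← hdx n])
        rw [← hdx n, ← hdsucc n] at this
        have := hrn (n + 1)
        linarith
    obtain ⟨n, hn⟩ := exists_lt_of_ciInf_lt (show (⨅ n, d n) < r + δ by linarith)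
    have hMeq : M1 T (u n) (u (n + 1)) = d n := by
      rw [hu n, M1_self T (u n), ← hdx n, ← hdsucc n]
      exact max_eq_left (hd_anti n)
    have := hδ (u n) (u (n + 1)) (by rw [hMeq]; exact hlt n) (by rw [hMeq]; exact hn)
    rw [← hu n, show T (u (n + 1)) = u (n + 2) from (hu (n + 1)).symm] at this
    have := hlt (n + 1)
    -- this : r < d (n+1), previous : dist (u (n+1)) (u (n+2)) ≤ r, i.e. d (n+1) ≤ r
    linarith [hδ (u n) (u (n + 1)) (by rw [hMeq]; exact hlt n) (by rw [hMeq]; exact hn),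
      hlt (n + 1)]
  have htend0 : Filter.Tendsto d Filter.atTop (nhds 0) := hreq ▸ htend
  have hcauchy : CauchySeq u := by
    rw [Metric.cauchySeq_iff']
    intro ε hε
    have hε2 : 0 < ε / 2 := by linarith
    obtain ⟨δ₀, hδ₀, hδ⟩ := h2 (ε / 2) hε2
    set δ := min δ₀ (min (ε / 2) 1) with hδdef
    have hδpos : 0 < δ := lt_min hδ₀ (lt_min hε2 one_pos)
    have hδ1 : δ ≤ 1 := (min_le_right _ _).trans (min_le_right _ _)
    have hδε : δ ≤ ε / 2 := (min_le_right _ _).trans (min_le_left _ _)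
    have hδδ : δ ≤ δ₀ := min_le_left _ _
    obtain ⟨N, hN⟩ : ∃ N, ∀ n ≥ N, d n < δ :=
      Filter.eventually_atTop.mp (htend0.eventually_lt_const hδpos)
    have key : ∀ n ≥ N, ∀ p, dist (u n) (u (n + p)) < ε / 2 + δ := by
      intro n hn p
      induction p with
      | zero => simpa using by linarith
      | succ p ih =>
        have h1d : d n < δ := hN n hn
        have h2d : d (n + p) < δ := hN (n + p) (le_trans hn (Nat.le_add_right n p))
        have hδ' : ∀ a b : X, ε / 2 < M1 T a b → M1 T a b < ε / 2 + δ →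
            dist (T a) (T b) ≤ ε / 2 :=
          fun a b ha hb => hδ a b ha (hb.trans_le (by linarith))
        have hstep : dist (T (u n)) (T (u (n + p))) ≤ ε / 2 := by
          apply contract T ψ hψ h1 hε2 hδ'
          apply M1_lt_of
          · exact ih
          · rw [← hdx n]; linarith
          · rw [← hdx (n + p)]; linarith
          · rw [← hdx n, ← hdx (n + p)]
            nlinarith [hd0 n, hd0 (n + p)]
        calc dist (u n) (u (n + (p + 1)))
            ≤ dist (u n) (u (n + 1)) + dist (u (n + 1)) (u (n + p + 1)) :=
              dist_triangle _ _ _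
          _ = d n + dist (T (u n)) (T (u (n + p))) := by
              rw [hu (n + p), hu n, hdx n]
          _ < ε / 2 + δ := by linarith
    refine ⟨N, fun n hn => ?_⟩
    have hkey := key N le_rfl (n - N)
    rw [Nat.add_sub_cancel' hn] at hkey
    calc dist (u n) (u N) = dist (u N) (u n) := dist_comm _ _
      _ < ε / 2 + δ := hkey
      _ ≤ ε := by linarith
  obtain ⟨y, hy⟩ := cauchySeq_tendsto_of_complete hcauchy
  refine ⟨y, hy, ?_⟩
  by_contra hne
  set c := dist y (T y) with hcdef
  have hc : 0 < c := dist_pos.mpr (fun h => hne h.symm)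
  obtain ⟨hψc0, hψc⟩ := hψ c hc
  have hdy : Filter.Tendsto (fun n => dist (u n) y) Filter.atTop (nhds 0) :=
    tendsto_iff_dist_tendsto_zero.mp hy
  obtain ⟨N₁, hN₁⟩ : ∃ N, ∀ n ≥ N, dist (u n) y < min c (c - ψ c) :=
    Filter.eventually_atTop.mp
      (hdy.eventually_lt_const (lt_min hc (by linarith)))
  obtain ⟨N₂, hN₂⟩ : ∃ N, ∀ n ≥ N, d n < min 1 c :=
    Filter.eventually_atTop.mp (htend0.eventually_lt_const (lt_min one_pos hc))
  set n := max N₁ N₂ with hndef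
  have hA : dist (u n) y < min c (c - ψ c) := hN₁ n (le_max_left _ _)
  have hB : d n < min 1 c := hN₂ n (le_max_right _ _)
  have hMle : M1 T (u n) y ≤ c := by
    apply M1_le_of
    · exact hA.le.trans (min_le_left _ _)
    · rw [← hdx n]; exact hB.le.trans (min_le_right _ _)
    · exact le_rfl
    · rw [← hdx n, ← hcdef]
      calc d n * c ≤ 1 * c :=
          mul_le_mul_of_nonneg_right (hB.le.trans (min_le_left _ _)) hc.le
        _ = c := one_mul c
  have hMge : c ≤ M1 T (u n) y := dist_y_le_M1 T (u n) y
  have hMeq : M1 T (u n) y = c := le_antisymm hMle hMge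
  have hcon : dist (T (u n)) (T y) ≤ ψ c := by
    have := h1 (u n) y (by rw [hMeq]; exact hc)
    rwa [hMeq] at this
  have hclose : dist (u (n + 1)) y < c - ψ c :=
    (hN₁ (n + 1) (le_trans (le_max_left _ _) (Nat.le_succ n))).trans_le
      (min_le_right _ _)
  have htri : c ≤ dist y (u (n + 1)) + dist (u (n + 1)) (T y) := dist_triangle _ _ _
  rw [hu n] at htri
  have hclose' : dist y (T (u n)) < c - ψ c := by
    rw [dist_comm, ← hu n]; exact hclose
  linarith

end aux

theorem stmt_0 {X : Type*} [MetricSpace X] [CompleteSpace X] [Nonempty X] (T : X → X)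
    (ψ : ℝ → ℝ) (hψ : ∀ t > (0 : ℝ), 0 < ψ t ∧ ψ t < t)
    (h1 : ∀ x y : X, 0 < M1 T x y → dist (T x) (T y) ≤ ψ (M1 T x y))
    (h2 : ∀ ε > (0 : ℝ), ∃ δ > (0 : ℝ), ∀ x y : X,
      ε < M1 T x y → M1 T x y < ε + δ → dist (T x) (T y) ≤ ε) :
    ∃ y₀ : X, (T y₀ = y₀ ∧ ∀ z : X, T z = z → z = y₀) ∧
      ∀ x : X, Filter.Tendsto (fun n : ℕ => T^[n] x) Filter.atTop (nhds y₀) := by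
  obtain ⟨y₀, hy₀, hfix⟩ := picard T ψ hψ h1 h2 (Classical.arbitrary X)
  refine ⟨y₀, ⟨hfix, fun z hz => uniq T ψ hψ h1 y₀ z hfix hz⟩, ?_⟩
  intro x
  obtain ⟨w, hw, hwfix⟩ := picard T ψ hψ h1 h2 x
  rwa [uniq T ψ hψ h1 y₀ w hfix hwfix] at hw
end

section
/- Let (X,d) be a nonempty complete metric space and T a self-mapping of X satisfying: (1) there exists a function ψ : (0,∞) → (0,∞) such that ψ(d(x,y)) < d(x,y) and d(Tx,Ty) ≤ ψ(d(x,y)) for all x,y ∈ X with x ≠ y; and (2) for every ε > 0 there exists δ > 0 such that for all t > 0, ε < t < ε + δ implies ψ(t) ≤ ε. Then T has a unique fixed point y₀ ∈ X, and for every x ∈ X the sequence of Picard iterates Tⁿx converges to y₀. -/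
open Filter

theorem stmt_3 {X : Type*} [MetricSpace X] [CompleteSpace X] [Nonempty X] (T : X → X)
    (ψ : ℝ → ℝ) (hψpos : ∀ t > (0 : ℝ), 0 < ψ t)
    (h1 : ∀ x y : X, x ≠ y →
      ψ (dist x y) < dist x y ∧ dist (T x) (T y) ≤ ψ (dist x y))
    (h2 : ∀ ε > (0 : ℝ), ∃ δ > (0 : ℝ), ∀ t > (0 : ℝ), ε < t → t < ε + δ → ψ t ≤ ε) :
    ∃ y₀ : X, (T y₀ = y₀ ∧ ∀ z : X, T z = z → z = y₀) ∧
      ∀ x : X, Filter.Tendsto (fun n : ℕ => T^[n] x) Filter.atTop (nhds y₀) := by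
  classical
  have A : ∀ a b : X, dist (T a) (T b) ≤ dist a b := by
    intro a b
    rcases eq_or_ne a b with rfl | h
    · simp
    · exact (h1 a b h).2.trans (h1 a b h).1.le
  have B : ∀ a b : X, a ≠ b → dist (T a) (T b) < dist a b :=
    fun a b h => (h1 a b h).2.trans_lt (h1 a b h).1
  have Tcont : Continuous T :=
    (LipschitzWith.of_dist_le_mul (K := 1) (fun a b => by simpa using A a b)).continuous
  have key : ∀ x : X, ∃ y : X, T y = y ∧
      Tendsto (fun n : ℕ => T^[n] x) atTop (nhds y) := by
    intro x
    set f : ℕ → X := fun n => T^[n] x with hf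
    have hfs : ∀ n, f (n + 1) = T (f n) := fun n => Function.iterate_succ_apply' T n x
    by_cases hc : ∃ N, f (N + 1) = f N
    · obtain ⟨N, hN⟩ := hc
      have hconst : ∀ k, f (N + k) = f N := by
        intro k
        induction k with
        | zero => rfl
        | succ k ih => rw [← Nat.add_assoc, hfs, ih, ← hfs, hN]
      refine ⟨f N, by rw [← hfs, hN], ?_⟩
      refine tendsto_atTop_of_eventually_const (i₀ := N) ?_
      intro n hn
      obtain ⟨k, rfl⟩ := Nat.exists_eq_add_of_le hn
      exact hconst k
    · push_neg at hc
      set d : ℕ → ℝ := fun n => dist (f n) (f (n + 1)) with hd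
      have dpos : ∀ n, 0 < d n := fun n => dist_pos.2 (hc n).symm
      have e : ∀ n, dist (f (n + 1)) (f (n + 1 + 1)) = dist (T (f n)) (T (f (n + 1))) := by
        intro n
        conv_rhs => rw [← hfs n, ← hfs (n + 1)]
      have dstep : ∀ n, d (n + 1) < d n := by
        intro n
        show dist (f (n + 1)) (f (n + 1 + 1)) < dist (f n) (f (n + 1))
        rw [e n]
        exact B _ _ (hc n).symm
      have dstep_le : ∀ n, d (n + 1) ≤ ψ (d n) := by
        intro n
        show dist (f (n + 1)) (f (n + 1 + 1)) ≤ ψ (dist (f n) (f (n + 1)))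
        rw [e n]
        exact (h1 _ _ (hc n).symm).2
      have hbdd : BddBelow (Set.range d) := ⟨0, by rintro y ⟨n, rfl⟩; exact (dpos n).le⟩
      have hmono : Antitone d := (strictAnti_nat_of_succ_lt dstep).antitone
      have htend : Tendsto d atTop (nhds (⨅ n, d n)) := tendsto_atTop_ciInf hmono hbdd
      set r : ℝ := ⨅ n, d n with hr
      have hrnn : 0 ≤ r := le_ciInf fun n => (dpos n).le
      have hgt : ∀ n, r < d n := fun n =>
        (ciInf_le hbdd (n + 1)).trans_lt (dstep n)
      have hr0 : r = 0 := by
        by_contra hrne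
        have hrpos : 0 < r := lt_of_le_of_ne hrnn (Ne.symm hrne)
        obtain ⟨δ, hδpos, hδ⟩ := h2 r hrpos
        obtain ⟨n, hn⟩ := (htend.eventually_lt_const (by linarith : r < r + δ)).exists
        have hψ : ψ (d n) ≤ r := hδ (d n) (dpos n) (hgt n) hn
        exact absurd ((dstep_le n).trans hψ) (not_le.2 (hgt (n + 1)))
      have htend0 : Tendsto d atTop (nhds 0) := hr0 ▸ htend
      have hcauchy : CauchySeq f := by
        rw [Metric.cauchySeq_iff']
        intro ε hε
        have hε2 : (0 : ℝ) < ε / 2 := by linarith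
        obtain ⟨δ₀, hδ₀, hδ⟩ := h2 (ε / 2) hε2
        set δ : ℝ := min δ₀ (ε / 2) with hδdef
        have hδpos : 0 < δ := lt_min hδ₀ hε2
        obtain ⟨N, hN⟩ := eventually_atTop.1 (htend0.eventually_lt_const hδpos)
        have claim : ∀ n ≥ N, ∀ k, dist (f n) (f (n + k + 1)) < ε / 2 + δ := by
          intro n hn k
          induction k with
          | zero =>
            have : d n < δ := hN n hn
            calc dist (f n) (f (n + 0 + 1)) = d n := by norm_num [hd]
              _ < δ := this
              _ ≤ ε / 2 + δ := by linarith
          | succ k ih =>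
            have step : dist (f (n + 1)) (f (n + k + 1 + 1)) ≤ ε / 2 := by
              rw [hfs n, hfs (n + k + 1)]
              by_cases hle : dist (f n) (f (n + k + 1)) ≤ ε / 2
              · exact (A _ _).trans hle
              · push_neg at hle
                have hp : 0 < dist (f n) (f (n + k + 1)) := lt_trans hε2 hle
                have hne : f n ≠ f (n + k + 1) := dist_pos.1 hp
                have hlt : dist (f n) (f (n + k + 1)) < ε / 2 + δ₀ :=
                  ih.trans_le (by have := min_le_left δ₀ (ε / 2); linarith)
                exact (h1 _ _ hne).2.trans (hδ _ hp hle hlt)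
            have htr : dist (f n) (f (n + k + 1 + 1)) ≤
                dist (f n) (f (n + 1)) + dist (f (n + 1)) (f (n + k + 1 + 1)) :=
              dist_triangle _ _ _
            have hdn : dist (f n) (f (n + 1)) < δ := hN n hn
            have : dist (f n) (f (n + k + 1 + 1)) < ε / 2 + δ := by linarith
            have heq : n + (k + 1) + 1 = n + k + 1 + 1 := by ring
            rw [heq]
            exact this
        refine ⟨N, fun n hn => ?_⟩
        rcases eq_or_lt_of_le hn with rfl | hlt
        · simpa using hε
        · obtain ⟨k, rfl⟩ := Nat.exists_eq_add_of_lt hlt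
          rw [dist_comm]
          have := claim N le_rfl k
          have hδle : δ ≤ ε / 2 := min_le_right _ _
          linarith
      obtain ⟨y, hy⟩ := cauchySeq_tendsto_of_complete hcauchy
      refine ⟨y, ?_, hy⟩
      have h1' : Tendsto (fun n => f (n + 1)) atTop (nhds y) :=
        hy.comp (tendsto_add_atTop_nat 1)
      have h2' : Tendsto (fun n => f (n + 1)) atTop (nhds (T y)) :=
        ((Tcont.tendsto y).comp hy).congr fun n => (hfs n).symm
      exact tendsto_nhds_unique h2' h1'
  obtain ⟨y₀, hy₀fix, hy₀tend⟩ := key (Classical.arbitrary X)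
  have uniq : ∀ z : X, T z = z → z = y₀ := by
    intro z hz
    by_contra hne
    have := B z y₀ hne
    rw [hz, hy₀fix] at this
    exact lt_irrefl _ this
  refine ⟨y₀, ⟨hy₀fix, uniq⟩, fun x => ?_⟩
  obtain ⟨y, hyfix, hytend⟩ := key x
  rwa [uniq y hyfix] at hytend
end

section
/- Let (X,d) be a nonempty complete metric space and T a self-mapping of X satisfying: (1) there exists a function ψ : (0,∞) → (0,∞) with ψ(t) < t for each t > 0 such that d(Tx,Ty) ≤ (1/2)·ψ(M₂(x,y)) for all x,y ∈ X with M₂(x,y) > 0; and (2) for every ε > 0 there exists δ > 0 such that for all x,y ∈ X, ε < M₂(x,y) < ε + δ implies d(Tx,Ty) ≤ ε. Then T has a unique fixed point y₀ ∈ X, and for every x ∈ X the sequence of Picard iterates Tⁿx converges to y₀. -/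
/-- The number `M₂(x,y)` associated to a self-mapping `T` of a metric space. -/
noncomputable def M2 {X : Type*} [MetricSpace X] (T : X → X) (x y : X) : ℝ :=
  max (max (max (dist x y) (dist (T x) x)) (max (dist (T y) y) (dist (T x) y)))
    (dist (T y) x)

section Aux

open Filter

variable {X : Type*} [MetricSpace X] {T : X → X}

lemma M2_le {x y : X} {c : ℝ} (h1 : dist x y ≤ c) (h2 : dist (T x) x ≤ c)
    (h3 : dist (T y) y ≤ c) (h4 : dist (T x) y ≤ c) (h5 : dist (T y) x ≤ c) :
    M2 T x y ≤ c := by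
  simp only [M2, max_le_iff]
  exact ⟨⟨⟨h1, h2⟩, h3, h4⟩, h5⟩

lemma dist_le_M2 (x y : X) : dist x y ≤ M2 T x y :=
  le_trans (le_trans (le_max_left _ _) (le_max_left _ _)) (le_max_left _ _)

lemma key_half {ψ : ℝ → ℝ} (hψ : ∀ t > (0 : ℝ), 0 < ψ t ∧ ψ t < t)
    (h1 : ∀ x y : X, 0 < M2 T x y → dist (T x) (T y) ≤ (1 / 2) * ψ (M2 T x y))
    (x y : X) : dist (T x) (T y) ≤ (1 / 2) * M2 T x y := by
  rcases lt_or_eq_of_le (le_trans dist_nonneg (dist_le_M2 (T := T) x y)) with hM | hM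
  · have hle := (hψ _ hM).2
    have := h1 x y hM
    linarith
  · have hxy : x = y := dist_le_zero.mp (le_trans (dist_le_M2 (T := T) x y) hM.ge)
    cases hxy
    have h0 : (0 : ℝ) ≤ M2 T x x := dist_nonneg.trans (dist_le_M2 (T := T) x x)
    simp only [dist_self]
    linarith

lemma picard_converges [CompleteSpace X]
    (hkey : ∀ x y : X, dist (T x) (T y) ≤ (1 / 2) * M2 T x y)
    (h2 : ∀ ε > (0 : ℝ), ∃ δ > (0 : ℝ), ∀ x y : X,
      ε < M2 T x y → M2 T x y < ε + δ → dist (T x) (T y) ≤ ε)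
    (x : X) : ∃ y : X, T y = y ∧ Tendsto (fun n : ℕ => T^[n] x) atTop (nhds y) := by
  have hT : ∀ n : ℕ, T (T^[n] x) = T^[n + 1] x :=
    fun n => (Function.iterate_succ_apply' T n x).symm
  set a : ℕ → ℝ := fun n => dist (T^[n + 1] x) (T^[n] x) with ha
  have ha_nonneg : ∀ n, 0 ≤ a n := fun n => dist_nonneg
  have hiter : ∀ m n : ℕ, dist (T^[m + 1] x) (T^[n + 1] x)
      ≤ (1 / 2) * M2 T (T^[m] x) (T^[n] x) := by
    intro m n
    rw [Function.iterate_succ_apply', Function.iterate_succ_apply']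
    exact hkey _ _
  -- a is nonincreasing
  have ha_succ : ∀ n, a (n + 1) ≤ a n := by
    intro n
    have h := hiter (n + 1) n
    have hM : M2 T (T^[n + 1] x) (T^[n] x) ≤ a n + a (n + 1) := by
      apply M2_le
      · -- dist x_{n+1} x_n = a n
        have := ha_nonneg (n + 1)
        show a n ≤ a n + a (n + 1)
        linarith
      · rw [hT (n + 1)]
        show a (n + 1) ≤ a n + a (n + 1)
        linarith [ha_nonneg n]
      · rw [hT n]
        show a n ≤ a n + a (n + 1)
        linarith [ha_nonneg (n + 1)]
      · rw [hT (n + 1)]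
        exact le_trans (dist_triangle _ (T^[n + 1] x) _) (by rw [add_comm])
      · rw [hT n, dist_self]
        linarith [ha_nonneg n, ha_nonneg (n + 1)]
    have h' : a (n + 1) ≤ (1 / 2) * M2 T (T^[n + 1] x) (T^[n] x) := h
    linarith
  have ha_anti : Antitone a := antitone_nat_of_succ_le ha_succ
  have hbdd : BddBelow (Set.range a) := ⟨0, by rintro _ ⟨n, rfl⟩; exact ha_nonneg n⟩
  set r := ⨅ n, a n with hr
  have hr_le : ∀ n, r ≤ a n := fun n => ciInf_le hbdd n
  have hr0 : 0 ≤ r := le_ciInf ha_nonneg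
  have h_tendsto_r : Tendsto a atTop (nhds r) := tendsto_atTop_ciInf ha_anti hbdd
  -- r = 0
  have hr_eq : r = 0 := by
    by_contra hne
    have hrpos : 0 < r := lt_of_le_of_ne hr0 (Ne.symm hne)
    obtain ⟨N, hN⟩ : ∃ N, a N < 2 * r := by
      have h2r : (⨅ n, a n) < 2 * r := by rw [← hr]; linarith
      exact exists_lt_of_ciInf_lt h2r
    set c : ℕ → ℝ := fun n => dist (T^[n + 2] x) (T^[n] x) with hc
    have hstep : ∀ n : ℕ, a (n + 1) ≤ (1 / 2) * M2 T (T^[n + 1] x) (T^[n] x) :=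
      fun n => hiter (n + 1) n
    -- claim 1 : 2 r ≤ c n for n ≥ N
    have hclaim1 : ∀ n, N ≤ n → 2 * r ≤ c n := by
      intro n hn
      by_contra hlt
      push_neg at hlt
      have haN : a n < 2 * r := lt_of_le_of_lt (ha_anti hn) hN
      have hM : M2 T (T^[n + 1] x) (T^[n] x) < 2 * r := by
        apply lt_of_le_of_lt (b := max (a n) (c n))
        · apply M2_le
          · exact le_max_left _ _
          · rw [hT (n + 1)]
            exact le_trans (ha_succ n) (le_max_left _ _)
          · rw [hT n]
            exact le_max_left _ _
          · rw [hT (n + 1)]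
            exact le_max_right _ _
          · rw [hT n, dist_self]
            exact le_trans (ha_nonneg n) (le_max_left _ _)
        · exact max_lt haN hlt
      have := hstep n
      have := hr_le (n + 1)
      linarith
    -- claim 2 : c (n+1) ≤ (1/2) c n for n ≥ N
    have hclaim2 : ∀ n, N ≤ n → c (n + 1) ≤ (1 / 2) * c n := by
      intro n hn
      have hstep2 : c (n + 1) ≤ (1 / 2) * M2 T (T^[n + 2] x) (T^[n] x) := hiter (n + 2) n
      have han : a n < 2 * r := lt_of_le_of_lt (ha_anti hn) hN
      have han1 : a (n + 1) < 2 * r := lt_of_le_of_lt (ha_anti (by omega)) hN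
      have han2 : a (n + 2) < 2 * r := lt_of_le_of_lt (ha_anti (by omega)) hN
      have hcn : 2 * r ≤ c n := hclaim1 n hn
      have hcn1 : 2 * r ≤ c (n + 1) := hclaim1 (n + 1) (by omega)
      have hM : M2 T (T^[n + 2] x) (T^[n] x) ≤ max (c n) (c (n + 1) + a n) := by
        apply M2_le
        · exact le_max_left _ _
        · rw [hT (n + 2)]
          exact le_trans (by linarith : a (n + 2) ≤ c n) (le_max_left _ _)
        · rw [hT n]
          exact le_trans (by linarith : a n ≤ c n) (le_max_left _ _)
        · rw [hT (n + 2)]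
          exact le_trans (dist_triangle _ (T^[n + 1] x) _) (le_max_right _ _)
        · rw [hT n, dist_comm]
          exact le_trans (by linarith : a (n + 1) ≤ c n) (le_max_left _ _)
      rcases le_total (c (n + 1) + a n) (c n) with hcase | hcase
      · have : M2 T (T^[n + 2] x) (T^[n] x) ≤ c n := hM.trans (max_le le_rfl hcase)
        linarith
      · have : M2 T (T^[n + 2] x) (T^[n] x) ≤ c (n + 1) + a n :=
          hM.trans (max_le hcase le_rfl)
        linarith
    have hpow : ∀ k : ℕ, c (N + k) ≤ (1 / 2 : ℝ) ^ k * c N := by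
      intro k
      induction k with
      | zero => simp
      | succ k ih =>
        have h1 : c (N + k + 1) ≤ (1 / 2) * c (N + k) := hclaim2 (N + k) (by omega)
        have h2' : (1 / 2 : ℝ) * c (N + k) ≤ (1 / 2) * ((1 / 2 : ℝ) ^ k * c N) := by
          linarith
        calc c (N + (k + 1)) = c (N + k + 1) := by rw [Nat.add_succ]
          _ ≤ (1 / 2) * ((1 / 2 : ℝ) ^ k * c N) := le_trans h1 h2'
          _ = (1 / 2 : ℝ) ^ (k + 1) * c N := by ring
    have hcN : 0 < c N := lt_of_lt_of_le (by linarith) (hclaim1 N le_rfl)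
    obtain ⟨k, hk⟩ := exists_pow_lt_of_lt_one (show (0 : ℝ) < 2 * r / c N by positivity)
      (by norm_num : (1 / 2 : ℝ) < 1)
    have h1 := hpow k
    have h2' := hclaim1 (N + k) (by omega)
    have h3 : (1 / 2 : ℝ) ^ k * c N < 2 * r := (lt_div_iff₀ hcN).mp hk
    linarith
  have ha_tendsto0 : Tendsto a atTop (nhds 0) := hr_eq ▸ h_tendsto_r
  -- Cauchy
  have hcauchy : CauchySeq (fun n : ℕ => T^[n] x) := by
    rw [Metric.cauchySeq_iff']
    intro ε' hε'
    obtain ⟨δ, hδ, hδ2⟩ := h2 (ε' / 3) (by linarith)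
    obtain ⟨N, hN⟩ := Metric.tendsto_atTop.mp ha_tendsto0 (min (δ / 2) (ε' / 3))
      (by positivity)
    have haN : a N < min (δ / 2) (ε' / 3) := by
      have := hN N le_rfl
      rwa [Real.dist_eq, sub_zero, abs_of_nonneg (ha_nonneg N)] at this
    have haN1 : a N < δ / 2 := lt_of_lt_of_le haN (min_le_left _ _)
    have haN2 : a N < ε' / 3 := lt_of_lt_of_le haN (min_le_right _ _)
    have hkey2 : ∀ m : ℕ, dist (T^[N + m] x) (T^[N] x) ≤ ε' / 3 + a N := by
      intro m
      induction m with
      | zero => simp; linarith [ha_nonneg N]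
      | succ m ih =>
        have hanm : a (N + m) ≤ a N := ha_anti (Nat.le_add_right N m)
        have hd1 : dist (T^[N + m + 1] x) (T^[N + 1] x) ≤ ε' / 3 := by
          have hM : M2 T (T^[N + m] x) (T^[N] x) ≤ ε' / 3 + 2 * a N := by
            apply M2_le
            · linarith [ha_nonneg N]
            · rw [hT (N + m)]
              show a (N + m) ≤ _
              linarith [ha_nonneg N, hε']
            · rw [hT N]
              show a N ≤ _
              linarith [ha_nonneg N, hε']
            · rw [hT (N + m)]
              exact le_trans (dist_triangle _ (T^[N + m] x) _) (by
                show a (N + m) + _ ≤ _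
                linarith)
            · rw [hT N]
              have htr := dist_triangle (T^[N + 1] x) (T^[N] x) (T^[N + m] x)
              rw [dist_comm (T^[N] x) (T^[N + m] x)] at htr
              exact le_trans htr (by
                show a N + _ ≤ _
                linarith)
          by_cases hcase : M2 T (T^[N + m] x) (T^[N] x) ≤ ε' / 3
          · have := hiter (N + m) N
            linarith
          · push_neg at hcase
            have hlt2 : M2 T (T^[N + m] x) (T^[N] x) < ε' / 3 + δ := by linarith
            have := hδ2 (T^[N + m] x) (T^[N] x) hcase hlt2
            rwa [hT (N + m), hT N] at this
        calc dist (T^[N + (m + 1)] x) (T^[N] x)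
            ≤ dist (T^[N + m + 1] x) (T^[N + 1] x) + dist (T^[N + 1] x) (T^[N] x) := by
              rw [Nat.add_succ]
              exact dist_triangle _ _ _
          _ ≤ ε' / 3 + a N := by
              have : dist (T^[N + 1] x) (T^[N] x) = a N := rfl
              linarith
    refine ⟨N, fun n hn => ?_⟩
    obtain ⟨m, rfl⟩ := Nat.exists_eq_add_of_le hn
    have := hkey2 m
    linarith
  obtain ⟨y, hy⟩ := cauchySeq_tendsto_of_complete hcauchy
  refine ⟨y, ?_, hy⟩
  by_contra hne
  have hd : 0 < dist (T y) y := dist_pos.mpr hne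
  obtain ⟨N, hN⟩ := Metric.tendsto_atTop.mp hy (dist (T y) y / 4) (by linarith)
  have e1 : dist (T^[N] x) y < dist (T y) y / 4 := hN N le_rfl
  have e2 : dist (T^[N + 1] x) y < dist (T y) y / 4 := hN (N + 1) (by omega)
  have hk := hkey y (T^[N] x)
  rw [hT N] at hk
  have hM : M2 T y (T^[N] x) ≤ dist (T y) y + dist (T y) y / 4 := by
    apply M2_le
    · rw [dist_comm]
      linarith
    · linarith
    · rw [hT N]
      have := dist_triangle (T^[N + 1] x) y (T^[N] x)
      rw [dist_comm y (T^[N] x)] at this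
      linarith
    · have := dist_triangle (T y) y (T^[N] x)
      rw [dist_comm y (T^[N] x)] at this
      linarith
    · rw [hT N]
      linarith
  have htri := dist_triangle (T y) (T^[N + 1] x) y
  linarith

end Aux

theorem stmt_5 {X : Type*} [MetricSpace X] [CompleteSpace X] [Nonempty X] (T : X → X)
    (ψ : ℝ → ℝ) (hψ : ∀ t > (0 : ℝ), 0 < ψ t ∧ ψ t < t)
    (h1 : ∀ x y : X, 0 < M2 T x y → dist (T x) (T y) ≤ (1 / 2) * ψ (M2 T x y))
    (h2 : ∀ ε > (0 : ℝ), ∃ δ > (0 : ℝ), ∀ x y : X,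
      ε < M2 T x y → M2 T x y < ε + δ → dist (T x) (T y) ≤ ε) :
    ∃ y₀ : X, (T y₀ = y₀ ∧ ∀ z : X, T z = z → z = y₀) ∧
      ∀ x : X, Filter.Tendsto (fun n : ℕ => T^[n] x) Filter.atTop (nhds y₀) := by
  have hkey : ∀ x y : X, dist (T x) (T y) ≤ (1 / 2) * M2 T x y := key_half hψ h1
  have huniq : ∀ z w : X, T z = z → T w = w → z = w := by
    intro z w hz hw
    have h := hkey z w
    have hM : M2 T z w ≤ dist z w := by
      apply M2_le le_rfl
      · rw [hz, dist_self]; exact dist_nonneg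
      · rw [hw, dist_self]; exact dist_nonneg
      · rw [hz]
      · rw [hw, dist_comm]
    rw [hz, hw] at h
    have hzw : dist z w ≤ 0 := by linarith
    exact dist_le_zero.mp hzw
  obtain ⟨y₀, hy₀, hy₀t⟩ := picard_converges hkey h2 (Classical.arbitrary X)
  refine ⟨y₀, ⟨hy₀, fun z hz => huniq z y₀ hz hy₀⟩, fun x => ?_⟩
  obtain ⟨y, hyfix, hyt⟩ := picard_converges hkey h2 x
  rwa [huniq y y₀ hyfix hy₀] at hyt
end

section
/- Let (X,d) be a nonempty complete metric space and T a self-mapping of X satisfying: (1) there exists a function ψ : (0,∞) → (0,∞) with ψ(t) < t for each t > 0 such that d(Tx,Ty) ≤ (1/2)·ψ(M₂(x,y)) for all x,y ∈ X with M₂(x,y) > 0; and (2) for every ε > 0 there exists δ > 0 such that for all x,y ∈ X, ε < M₂(x,y) < ε + δ implies d(Tx,Ty) ≤ ε. Let y₀ be the unique fixed point of T. Then T is continuous at y₀ if and only if M₂(x,y₀) → 0 as x → y₀ (equivalently, T is discontinuous at y₀ if and only if the limit of M₂(x,y₀) as x → y₀ is not 0). -/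
theorem stmt_6 {X : Type*} [MetricSpace X] [CompleteSpace X] [Nonempty X] (T : X → X)
    (ψ : ℝ → ℝ) (hψ : ∀ t > (0 : ℝ), 0 < ψ t ∧ ψ t < t)
    (h1 : ∀ x y : X, 0 < M2 T x y → dist (T x) (T y) ≤ (1 / 2) * ψ (M2 T x y))
    (h2 : ∀ ε > (0 : ℝ), ∃ δ > (0 : ℝ), ∀ x y : X,
      ε < M2 T x y → M2 T x y < ε + δ → dist (T x) (T y) ≤ ε)
    (y₀ : X) (hy₀ : T y₀ = y₀ ∧ ∀ z : X, T z = z → z = y₀) :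
    ContinuousAt T y₀ ↔
      Filter.Tendsto (fun x : X => M2 T x y₀) (nhds y₀) (nhds 0) := by
  have hT : T y₀ = y₀ := hy₀.1
  constructor
  · intro hc
    have hTx : Filter.Tendsto T (nhds y₀) (nhds y₀) := by
      simpa [ContinuousAt, hT] using hc
    have hid : Filter.Tendsto (fun x : X => x) (nhds y₀) (nhds y₀) := Filter.tendsto_id
    have hc0 : Filter.Tendsto (fun _ : X => y₀) (nhds y₀) (nhds y₀) := tendsto_const_nhds
    have A := hid.dist hc0
    have B := hTx.dist hid
    have C := hc0.dist hc0
    have D := hTx.dist hc0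
    have E := hc0.dist hid
    have := ((A.max B).max (C.max D)).max E
    simpa [M2, hT] using this
  · intro h
    have hle : ∀ x : X, dist (T x) (T y₀) ≤ M2 T x y₀ := by
      intro x
      rw [hT]
      exact le_max_of_le_left (le_max_of_le_right (le_max_right _ _))
    have : Filter.Tendsto (fun x : X => dist (T x) (T y₀)) (nhds y₀) (nhds 0) :=
      squeeze_zero (fun x => dist_nonneg) hle h
    exact tendsto_iff_dist_tendsto_zero.mpr this
end

section
/- Let (X,d) be a nonempty complete metric space and T a self-mapping of X satisfying: (1) d(Tx,Ty) ≤ M₂(x,y)/2 for all x,y ∈ X with M₂(x,y) > 0; and (2) for every ε > 0 there exists δ > 0 such that for all x,y ∈ X, ε < M₂(x,y) < ε + δ implies d(Tx,Ty) ≤ ε. Then T has a unique fixed point y₀ ∈ X, for every x ∈ X the sequence of Picard iterates Tⁿx converges to y₀, and T is discontinuous at y₀ if and only if the limit of M₂(x,y₀) as x → y₀ is not 0. -/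
open Filter Topology

section Aux

variable {X : Type*} [MetricSpace X] {T : X → X}

lemma M2_le_s7 {x y : X} {m : ℝ} (hA : dist x y ≤ m) (hB : dist (T x) x ≤ m)
    (hC : dist (T y) y ≤ m) (hD : dist (T x) y ≤ m) (hE : dist (T y) x ≤ m) :
    M2 T x y ≤ m :=
  max_le (max_le (max_le hA hB) (max_le hC hD)) hE

lemma dist_xy_le_M2 (T : X → X) (x y : X) : dist x y ≤ M2 T x y :=
  ((le_max_left _ _).trans (le_max_left _ _)).trans (le_max_left _ _)

lemma dist_Txx_le_M2 (T : X → X) (x y : X) : dist (T x) x ≤ M2 T x y :=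
  ((le_max_right _ _).trans (le_max_left _ _)).trans (le_max_left _ _)

lemma dist_Tyy_le_M2 (T : X → X) (x y : X) : dist (T y) y ≤ M2 T x y :=
  ((le_max_left _ _).trans (le_max_right _ _)).trans (le_max_left _ _)

lemma dist_Txy_le_M2 (T : X → X) (x y : X) : dist (T x) y ≤ M2 T x y :=
  ((le_max_right _ _).trans (le_max_right _ _)).trans (le_max_left _ _)

lemma M2_nonneg (T : X → X) (x y : X) : 0 ≤ M2 T x y :=
  dist_nonneg.trans (dist_xy_le_M2 T x y)

lemma M2_key (h1 : ∀ x y : X, 0 < M2 T x y → dist (T x) (T y) ≤ M2 T x y / 2)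
    (x y : X) : dist (T x) (T y) ≤ M2 T x y / 2 := by
  rcases (M2_nonneg T x y).lt_or_eq with h | h
  · exact h1 x y h
  · have hA : dist x y ≤ 0 := by rw [h]; exact dist_xy_le_M2 T x y
    have hB : dist (T x) x ≤ 0 := by rw [h]; exact dist_Txx_le_M2 T x y
    have hC : dist (T y) y ≤ 0 := by rw [h]; exact dist_Tyy_le_M2 T x y
    have h4 := dist_triangle4 (T x) x y (T y)
    have hcm : dist y (T y) = dist (T y) y := dist_comm _ _
    linarith

lemma step1 (key : ∀ x y : X, dist (T x) (T y) ≤ M2 T x y / 2) (x : X) :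
    dist (T x) (T (T x)) ≤ dist x (T x) := by
  have hk := key x (T x)
  have hb : dist (T x) x = dist x (T x) := dist_comm _ _
  have hc : dist (T (T x)) (T x) = dist (T x) (T (T x)) := dist_comm _ _
  have he : dist (T (T x)) x ≤ dist (T (T x)) (T x) + dist (T x) x := dist_triangle _ _ _
  have hnn1 : (0:ℝ) ≤ dist (T x) (T (T x)) := dist_nonneg
  have hnn2 : (0:ℝ) ≤ dist x (T x) := dist_nonneg
  have hM : M2 T x (T x) ≤ dist x (T x) + dist (T x) (T (T x)) := by
    apply M2_le_s7
    · linarith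
    · linarith
    · linarith
    · rw [dist_self]; linarith
    · linarith
  linarith

lemma step2 (key : ∀ x y : X, dist (T x) (T y) ≤ M2 T x y / 2) (y : X) :
    dist (T y) (T (T (T y))) ≤
      (dist y (T y) + dist (T y) (T (T y)) + dist (T (T y)) (T (T (T y)))) / 2 := by
  have hk := key y (T (T y))
  have hnn1 : (0:ℝ) ≤ dist y (T y) := dist_nonneg
  have hnn2 : (0:ℝ) ≤ dist (T y) (T (T y)) := dist_nonneg
  have hnn3 : (0:ℝ) ≤ dist (T (T y)) (T (T (T y))) := dist_nonneg
  have hM : M2 T y (T (T y)) ≤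
      dist y (T y) + dist (T y) (T (T y)) + dist (T (T y)) (T (T (T y))) := by
    apply M2_le_s7
    · have := dist_triangle y (T y) (T (T y)); linarith
    · rw [dist_comm]; linarith
    · rw [dist_comm]; linarith
    · linarith
    · have := dist_triangle4 (T (T (T y))) (T (T y)) (T y) y
      rw [dist_comm (T (T (T y))) (T (T y)), dist_comm (T (T y)) (T y),
        dist_comm (T y) y] at this
      linarith
  linarith

lemma step3 (key : ∀ x y : X, dist (T x) (T y) ≤ M2 T x y / 2) (a : X) :
    dist (T a) (T (T a)) ≤ max (dist a (T a)) (dist a (T (T a))) / 2 := by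
  have hk := key a (T a)
  have hC := step1 key a
  have hM : M2 T a (T a) ≤ max (dist a (T a)) (dist a (T (T a))) := by
    apply M2_le_s7
    · exact le_max_left _ _
    · rw [dist_comm]; exact le_max_left _ _
    · rw [dist_comm]; exact hC.trans (le_max_left _ _)
    · rw [dist_self]; exact le_trans dist_nonneg (le_max_left _ _)
    · rw [dist_comm]; exact le_max_right _ _
  linarith

lemma picard_cauchy
    (key : ∀ x y : X, dist (T x) (T y) ≤ M2 T x y / 2)
    (h2 : ∀ ε > (0 : ℝ), ∃ δ > (0 : ℝ), ∀ x y : X,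
      ε < M2 T x y → M2 T x y < ε + δ → dist (T x) (T y) ≤ ε)
    (x : X) : CauchySeq (fun n : ℕ => T^[n] x) := by
  set u : ℕ → X := fun n => T^[n] x with hu
  have hsu : ∀ n : ℕ, u (n + 1) = T (u n) := fun n => Function.iterate_succ_apply' T n x
  have hanti : ∀ n, dist (u (n+1)) (u (n+2)) ≤ dist (u n) (u (n+1)) := by
    intro n
    rw [hsu (n+1), hsu n]
    exact step1 key (u n)
  have hantit : Antitone (fun n => dist (u n) (u (n+1))) := antitone_nat_of_succ_le hanti
  have hbdd : BddBelow (Set.range fun n => dist (u n) (u (n+1))) :=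
    ⟨0, by rintro r ⟨n, rfl⟩; exact dist_nonneg⟩
  have hrt : Tendsto (fun n => dist (u n) (u (n+1))) atTop
      (𝓝 (⨅ n, dist (u n) (u (n+1)))) := tendsto_atTop_ciInf hantit hbdd
  set r := ⨅ n, dist (u n) (u (n+1)) with hr
  have hr0 : 0 ≤ r := le_ciInf fun n => dist_nonneg
  have hineq : ∀ n, dist (u (n+2)) (u (n+3)) ≤
      max (dist (u (n+1)) (u (n+2)))
        ((dist (u n) (u (n+1)) + dist (u (n+1)) (u (n+2)) + dist (u (n+2)) (u (n+3))) / 2) / 2 := by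
    intro n
    have h3 := step3 key (u (n+1))
    rw [← hsu (n+1), ← hsu (n+2)] at h3
    have h2' := step2 key (u n)
    rw [← hsu n, ← hsu (n+1), ← hsu (n+2)] at h2'
    have hmx := max_le_max (le_refl (dist (u (n+1)) (u (n+2)))) h2'
    linarith
  have l0 : Tendsto (fun n => dist (u (n+1)) (u (n+2))) atTop (𝓝 r) :=
    hrt.comp (tendsto_add_atTop_nat 1)
  have l1 : Tendsto (fun n => dist (u (n+2)) (u (n+3))) atTop (𝓝 r) :=
    hrt.comp (tendsto_add_atTop_nat 2)
  have lr : Tendsto (fun n => max (dist (u (n+1)) (u (n+2)))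
      ((dist (u n) (u (n+1)) + dist (u (n+1)) (u (n+2)) + dist (u (n+2)) (u (n+3))) / 2) / 2)
      atTop (𝓝 (max r ((r + r + r) / 2) / 2)) :=
    (l0.max (((hrt.add l0).add l1).div_const 2)).div_const 2
  have hre : r ≤ max r ((r + r + r) / 2) / 2 := le_of_tendsto_of_tendsto' l1 lr hineq
  have hr00 : r = 0 := by
    have hmr : max r ((r + r + r) / 2) = (r + r + r) / 2 := max_eq_right (by linarith)
    rw [hmr] at hre
    linarith
  have hd0 : Tendsto (fun n => dist (u n) (u (n+1))) atTop (𝓝 0) := hr00 ▸ hrt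
  rw [Metric.cauchySeq_iff']
  intro ε hε
  obtain ⟨δ, hδ, hδ2⟩ := h2 (ε/2) (by linarith)
  obtain ⟨N, hN⟩ := (hd0.eventually (gt_mem_nhds (show (0:ℝ) < δ/4 by linarith))).exists
  have hdsmall : ∀ n, N ≤ n → dist (u n) (u (n+1)) < δ/4 :=
    fun n hn => lt_of_le_of_lt (hantit hn) hN
  have main : ∀ k, dist (u (N+1)) (u (N+1+k)) ≤ ε/2 := by
    intro k
    induction k with
    | zero => simp; linarith
    | succ k ih =>
      have hm : N + 1 + (k+1) = (N + k + 1) + 1 := by omega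
      rw [hm, hsu (N+k+1), hsu N]
      have ihm : dist (u (N+1)) (u (N+k+1)) ≤ ε/2 := by
        have hmm : N + 1 + k = N + k + 1 := by omega
        rw [← hmm]; exact ih
      have hdN := hdsmall N le_rfl
      have hdm := hdsmall (N+k+1) (by omega)
      have hANm : dist (u N) (u (N+k+1)) ≤ δ/4 + ε/2 := by
        have := dist_triangle (u N) (u (N+1)) (u (N+k+1)); linarith
      have hM : M2 T (u N) (u (N+k+1)) ≤ ε/2 + δ/2 := by
        apply M2_le_s7
        · linarith
        · rw [← hsu N, dist_comm]; linarith
        · rw [← hsu (N+k+1), dist_comm]; linarith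
        · rw [← hsu N]; linarith
        · rw [← hsu (N+k+1)]
          have htr := dist_triangle (u (N+k+2)) (u (N+k+1)) (u N)
          have hc1 : dist (u (N+k+2)) (u (N+k+1)) = dist (u (N+k+1)) (u (N+k+2)) :=
            dist_comm _ _
          have hc2 : dist (u (N+k+1)) (u N) = dist (u N) (u (N+k+1)) := dist_comm _ _
          linarith
      by_cases hc : M2 T (u N) (u (N+k+1)) ≤ ε/2
      · have hk := key (u N) (u (N+k+1)); linarith
      · push_neg at hc
        exact hδ2 (u N) (u (N+k+1)) hc (by linarith)
  refine ⟨N+1, fun n hn => ?_⟩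
  have hk : n = N + 1 + (n - (N+1)) := by omega
  calc dist (u n) (u (N+1)) = dist (u (N+1)) (u n) := dist_comm _ _
    _ ≤ ε/2 := by rw [hk]; exact main _
    _ < ε := by linarith

lemma limit_fixed (key : ∀ x y : X, dist (T x) (T y) ≤ M2 T x y / 2) {x y : X}
    (hy : Tendsto (fun n : ℕ => T^[n] x) atTop (𝓝 y)) : T y = y := by
  have hsucc : ∀ n : ℕ, T^[n+1] x = T (T^[n] x) := fun n => Function.iterate_succ_apply' T n x
  have h1t : Tendsto (fun n : ℕ => T^[n+1] x) atTop (𝓝 y) := hy.comp (tendsto_add_atTop_nat 1)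
  have h2t : Tendsto (fun n : ℕ => T^[n+2] x) atTop (𝓝 y) := hy.comp (tendsto_add_atTop_nat 2)
  have he : Tendsto (fun n : ℕ => dist (T^[n+1] x) y) atTop (𝓝 0) := by
    simpa using h1t.dist (tendsto_const_nhds (x := y))
  have hf : Tendsto (fun n : ℕ => dist (T^[n+1] x) (T^[n+2] x)) atTop (𝓝 0) := by
    simpa using h1t.dist h2t
  have hkey : ∀ n : ℕ, dist (T y) y / 2 ≤
      (3/2) * (dist (T^[n+1] x) y + dist (T^[n+1] x) (T^[n+2] x)) := by
    intro n
    have hk := key y (T^[n+1] x)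
    have hnnc : (0:ℝ) ≤ dist (T y) y := dist_nonneg
    have hnne : (0:ℝ) ≤ dist (T^[n+1] x) y := dist_nonneg
    have hnnf : (0:ℝ) ≤ dist (T^[n+1] x) (T^[n+2] x) := dist_nonneg
    have hM : M2 T y (T^[n+1] x) ≤
        dist (T y) y + dist (T^[n+1] x) y + dist (T^[n+1] x) (T^[n+2] x) := by
      apply M2_le_s7
      · rw [dist_comm]; linarith
      · linarith
      · rw [← hsucc (n+1), dist_comm]; linarith
      · have := dist_triangle (T y) y (T^[n+1] x)
        have hcm : dist y (T^[n+1] x) = dist (T^[n+1] x) y := dist_comm _ _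
        linarith
      · rw [← hsucc (n+1)]
        have := dist_triangle (T^[n+2] x) (T^[n+1] x) y
        have hcm : dist (T^[n+2] x) (T^[n+1] x) = dist (T^[n+1] x) (T^[n+2] x) :=
          dist_comm _ _
        linarith
    have htr := dist_triangle (T y) (T (T^[n+1] x)) y
    have hlast : dist (T (T^[n+1] x)) y ≤
        dist (T^[n+1] x) (T^[n+2] x) + dist (T^[n+1] x) y := by
      rw [← hsucc (n+1)]
      have := dist_triangle (T^[n+2] x) (T^[n+1] x) y
      have hcm : dist (T^[n+2] x) (T^[n+1] x) = dist (T^[n+1] x) (T^[n+2] x) := dist_comm _ _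
      linarith
    linarith
  have h0 : Tendsto (fun n : ℕ =>
      (3/2) * (dist (T^[n+1] x) y + dist (T^[n+1] x) (T^[n+2] x))) atTop (𝓝 0) := by
    simpa using (he.add hf).const_mul (3/2 : ℝ)
  have hc2 : dist (T y) y / 2 ≤ 0 := ge_of_tendsto' h0 hkey
  have : dist (T y) y = 0 := le_antisymm (by linarith) dist_nonneg
  exact dist_eq_zero.mp this

end Aux

theorem stmt_7 {X : Type*} [MetricSpace X] [CompleteSpace X] [Nonempty X] (T : X → X)
    (h1 : ∀ x y : X, 0 < M2 T x y → dist (T x) (T y) ≤ M2 T x y / 2)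
    (h2 : ∀ ε > (0 : ℝ), ∃ δ > (0 : ℝ), ∀ x y : X,
      ε < M2 T x y → M2 T x y < ε + δ → dist (T x) (T y) ≤ ε) :
    ∃ y₀ : X, (T y₀ = y₀ ∧ ∀ z : X, T z = z → z = y₀) ∧
      (∀ x : X, Filter.Tendsto (fun n : ℕ => T^[n] x) Filter.atTop (nhds y₀)) ∧
      (¬ ContinuousAt T y₀ ↔
        ¬ Filter.Tendsto (fun x : X => M2 T x y₀) (nhds y₀) (nhds 0)) := by
  have key : ∀ x y : X, dist (T x) (T y) ≤ M2 T x y / 2 := M2_key h1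
  have uniq : ∀ z w : X, T z = z → T w = w → z = w := by
    intro z w hz hw
    have hk := key z w
    have hM : M2 T z w ≤ dist z w := by
      apply M2_le_s7
      · exact le_rfl
      · rw [hz, dist_self]; exact dist_nonneg
      · rw [hw, dist_self]; exact dist_nonneg
      · rw [hz]
      · rw [hw, dist_comm]
    rw [hz, hw] at hk
    have : dist z w ≤ 0 := by linarith
    exact dist_le_zero.mp this
  obtain ⟨y₀, hy₀⟩ := cauchySeq_tendsto_of_complete (picard_cauchy key h2 (Classical.arbitrary X))
  have hfix : T y₀ = y₀ := limit_fixed key hy₀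
  refine ⟨y₀, ⟨hfix, fun z hz => uniq z y₀ hz hfix⟩, ?_, ?_⟩
  · intro x
    obtain ⟨y, hy⟩ := cauchySeq_tendsto_of_complete (picard_cauchy key h2 x)
    have hyfix : T y = y := limit_fixed key hy
    rwa [uniq y y₀ hyfix hfix] at hy
  · apply not_congr
    constructor
    · intro hcont
      have tT : Tendsto T (𝓝 y₀) (𝓝 y₀) := by
        have := hcont.tendsto; rwa [hfix] at this
      have t1 : Tendsto (fun x : X => dist x y₀) (𝓝 y₀) (𝓝 0) := by
        simpa using (tendsto_id (x := 𝓝 y₀)).dist (tendsto_const_nhds (x := y₀))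
      have t2 : Tendsto (fun x : X => dist (T x) x) (𝓝 y₀) (𝓝 0) := by
        simpa using tT.dist (tendsto_id (x := 𝓝 y₀))
      have t3 : Tendsto (fun x : X => dist (T x) y₀) (𝓝 y₀) (𝓝 0) := by
        simpa using tT.dist (tendsto_const_nhds (x := y₀))
      have tg : Tendsto (fun x : X => dist x y₀ + dist (T x) x + dist (T x) y₀)
          (𝓝 y₀) (𝓝 0) := by
        simpa using (t1.add t2).add t3
      refine squeeze_zero (fun x => M2_nonneg T x y₀) (fun x => ?_) tg
      apply M2_le_s7
      · linarith [dist_nonneg (x := T x) (y := x), dist_nonneg (x := T x) (y := y₀)]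
      · linarith [dist_nonneg (x := x) (y := y₀), dist_nonneg (x := T x) (y := y₀)]
      · rw [hfix, dist_self]
        linarith [dist_nonneg (x := x) (y := y₀), dist_nonneg (x := T x) (y := x),
          dist_nonneg (x := T x) (y := y₀)]
      · linarith [dist_nonneg (x := x) (y := y₀), dist_nonneg (x := T x) (y := x)]
      · rw [hfix, dist_comm]
        linarith [dist_nonneg (x := T x) (y := x), dist_nonneg (x := T x) (y := y₀)]
    · intro hM2
      have hd : Tendsto (fun x : X => dist (T x) y₀) (𝓝 y₀) (𝓝 0) :=
        squeeze_zero (fun _ => dist_nonneg) (fun x => dist_Txy_le_M2 T x y₀) hM2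
      have : Tendsto T (𝓝 y₀) (𝓝 y₀) := tendsto_iff_dist_tendsto_zero.mpr hd
      rw [ContinuousAt, hfix]
      exact this
end

section
/- Let (X,d) be a metric space, T a self-mapping of X, and C_{x₀,r} = {x ∈ X : d(x₀,x) = r} a circle in X that is a fixed circle of T (i.e., Tx = x for every x ∈ C_{x₀,r}). Then for every x ∈ C_{x₀,r}, T is continuous at x if and only if M₁(z,x) → 0 as z → x (equivalently, T is discontinuous at x if and only if the limit of M₁(z,x) as z → x is not 0). -/
/-! At a fixed point `x` of `T` every term of `M₁(z,x)` involving `d(x,Tx)` vanishes, so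
`M₁(z,x) = max (d(z,x), d(z,Tz))`. As `d(z,x) → 0` anyway, `M₁(z,x) → 0` says exactly that the
displacement `d(z,Tz)` tends to `0`, which at a fixed point is continuity of `T`. -/

open Filter Topology Function

section FixedPoint

variable {X : Type*} [MetricSpace X] {T : X → X} {x : X}

theorem M1_eq_max_of_isFixedPt (hx : IsFixedPt T x) (z : X) :
    M1 T z x = max (dist z x) (dist z (T z)) := by
  have hpos : 0 ≤ max (dist z x) (dist z (T z)) := le_max_of_le_left dist_nonneg
  simp only [M1, hx.eq, dist_self, mul_zero, zero_div, max_self, max_eq_left hpos]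

theorem continuousAt_iff_tendsto_dist_self_of_isFixedPt (hx : IsFixedPt T x) :
    ContinuousAt T x ↔ Tendsto (fun z => dist z (T z)) (𝓝 x) (𝓝 0) := by
  rw [ContinuousAt, hx.eq]
  refine ⟨fun hT => ?_, tendsto_id.congr_dist⟩
  simpa using tendsto_id.dist hT

theorem tendsto_M1_iff_tendsto_dist_self_of_isFixedPt (hx : IsFixedPt T x) :
    Tendsto (fun z => M1 T z x) (𝓝 x) (𝓝 0) ↔ Tendsto (fun z => dist z (T z)) (𝓝 x) (𝓝 0) := by
  simp only [M1_eq_max_of_isFixedPt hx]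
  refine ⟨fun h => squeeze_zero (fun _ => dist_nonneg) (fun _ => le_max_right _ _) h,
    fun h => ?_⟩
  have hid : Tendsto (fun z => dist z x) (𝓝 x) (𝓝 0) := tendsto_iff_dist_tendsto_zero.mp tendsto_id
  simpa using hid.max h

end FixedPoint

theorem stmt_10_general {X : Type*} [MetricSpace X] (T : X → X) (x₀ : X) (r : ℝ)
    (hfix : ∀ x : X, dist x₀ x = r → T x = x) :
    ∀ x : X, dist x₀ x = r →
      (ContinuousAt T x ↔
        Filter.Tendsto (fun z : X => M1 T z x) (nhds x) (nhds 0)) := by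
  intro x hx
  have hfixed : IsFixedPt T x := hfix x hx
  rw [continuousAt_iff_tendsto_dist_self_of_isFixedPt hfixed,
    tendsto_M1_iff_tendsto_dist_self_of_isFixedPt hfixed]

theorem stmt_10 {X : Type*} [MetricSpace X] (T : X → X) (x₀ : X) (r : ℝ) (hr : 0 < r)
    (hfix : ∀ x : X, dist x₀ x = r → T x = x) :
    ∀ x : X, dist x₀ x = r →
      (ContinuousAt T x ↔
        Filter.Tendsto (fun z : X => M1 T z x) (nhds x) (nhds 0)) :=
  stmt_10_general T x₀ r hfix
end

section
/- Let X = [0,4] be equipped with the usual metric d(x,y) = |x − y|, and define T : X → X by Tx = 2 if x ≤ 2 and Tx = 0 if x > 2. Define ψ : (0,∞) → (0,∞) by ψ(t) = 2 if t > 2 and ψ(t) = t/2 if t ≤ 2. Then ψ(t) < t for all t > 0, d(Tx,Ty) ≤ ψ(M₁(x,y)) for all x,y ∈ X with M₁(x,y) > 0, T has x = 2 as its unique fixed point, and T is discontinuous at x = 2. -/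
/-- The self-mapping of `[0,4]` given by `Tx = 2` if `x ≤ 2` and `Tx = 0` if `x > 2`. -/
noncomputable def T13 : Set.Icc (0 : ℝ) 4 → Set.Icc (0 : ℝ) 4 :=
  fun x => if (x : ℝ) ≤ 2 then ⟨2, by norm_num⟩ else ⟨0, by norm_num⟩

/-- `ψ(t) = 2` if `t > 2` and `ψ(t) = t/2` if `t ≤ 2`. -/
noncomputable def ψ13 : ℝ → ℝ := fun t => if 2 < t then 2 else t / 2

lemma psi13_pos {t : ℝ} (ht : 0 < t) : 0 < ψ13 t := by
  unfold ψ13; split <;> linarith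

lemma M1_big' {x y : Set.Icc (0 : ℝ) 4} (hx : ¬ (x : ℝ) ≤ 2) : 2 < M1 T13 x y := by
  have hTx : T13 x = ⟨0, by norm_num⟩ := by simp [T13, hx]
  have hd : dist x (T13 x) = (x : ℝ) := by
    rw [hTx, Subtype.dist_eq, Real.dist_eq]
    simp [abs_of_nonneg x.2.1]
  have h2 : (2:ℝ) < dist x (T13 x) := by rw [hd]; linarith [not_le.mp hx]
  calc (2:ℝ) < dist x (T13 x) := h2
    _ ≤ M1 T13 x y := by
        unfold M1
        exact le_max_of_le_left (le_max_of_le_left (le_max_right _ _))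

lemma M1_big {x y : Set.Icc (0 : ℝ) 4} (hy : ¬ (y : ℝ) ≤ 2) : 2 < M1 T13 x y := by
  have hTy : T13 y = ⟨0, by norm_num⟩ := by simp [T13, hy]
  have hd : dist y (T13 y) = (y : ℝ) := by
    rw [hTy, Subtype.dist_eq, Real.dist_eq]
    simp [abs_of_nonneg y.2.1]
  have : (2:ℝ) < dist y (T13 y) := by rw [hd]; linarith [not_le.mp hy]
  calc (2:ℝ) < dist y (T13 y) := this
    _ ≤ M1 T13 x y := by
        unfold M1
        exact le_max_of_le_left (le_max_of_le_right (le_max_left _ _))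

theorem stmt_13 :
    (∀ t > (0 : ℝ), ψ13 t < t) ∧
    (∀ x y : Set.Icc (0 : ℝ) 4, 0 < M1 T13 x y →
      dist (T13 x) (T13 y) ≤ ψ13 (M1 T13 x y)) ∧
    (T13 ⟨2, by norm_num⟩ = ⟨2, by norm_num⟩ ∧
      ∀ z : Set.Icc (0 : ℝ) 4, T13 z = z → z = ⟨2, by norm_num⟩) ∧
    ¬ ContinuousAt T13 ⟨2, by norm_num⟩ := by
  refine ⟨?_, ?_, ⟨?_, ?_⟩, ?_⟩
  · intro t ht
    unfold ψ13; split <;> linarith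
  · intro x y hM
    have hdist2 : dist (⟨2, by norm_num⟩ : Set.Icc (0:ℝ) 4) ⟨0, by norm_num⟩ = 2 := by
      rw [Subtype.dist_eq, Real.dist_eq]; norm_num
    by_cases hx : (x : ℝ) ≤ 2 <;> by_cases hy : (y : ℝ) ≤ 2
    · have : T13 x = T13 y := by simp [T13, hx, hy]
      rw [this, dist_self]
      exact (psi13_pos hM).le
    · have h2 : 2 < M1 T13 x y := M1_big (x := x) hy
      have : ψ13 (M1 T13 x y) = 2 := by unfold ψ13; rw [if_pos h2]
      rw [this]
      simp only [T13, if_pos hx, if_neg hy]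
      rw [hdist2]
    · have h2' : 2 < M1 T13 x y := M1_big' hx
      have : ψ13 (M1 T13 x y) = 2 := by unfold ψ13; rw [if_pos h2']
      rw [this]
      simp only [T13, if_pos hy, if_neg hx]
      rw [dist_comm, hdist2]
    · have : T13 x = T13 y := by simp [T13, hx, hy]
      rw [this, dist_self]
      exact (psi13_pos hM).le
  · simp [T13]
  · intro z hz
    by_cases h : (z : ℝ) ≤ 2
    · rw [T13] at hz; simp only [if_pos h] at hz; exact hz.symm
    · rw [T13] at hz; simp only [if_neg h] at hz
      exfalso
      have : (z : ℝ) = 0 := by rw [← hz]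
      linarith [not_le.mp h]
  · intro hc
    rw [Metric.continuousAt_iff] at hc
    obtain ⟨δ, hδ, h⟩ := hc 1 one_pos
    set ε := min (δ/2) 1 with hε
    have hε0 : 0 < ε := lt_min (by linarith) one_pos
    have hε1 : ε ≤ 1 := min_le_right _ _
    have hx4 : (2 + ε : ℝ) ∈ Set.Icc (0:ℝ) 4 := ⟨by linarith, by linarith⟩
    have hd : dist (⟨2 + ε, hx4⟩ : Set.Icc (0:ℝ) 4) ⟨2, by norm_num⟩ < δ := by
      rw [Subtype.dist_eq, Real.dist_eq]
      have : |(2 + ε : ℝ) - 2| = ε := by rw [abs_of_nonneg] <;> linarith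
      rw [this]
      calc ε ≤ δ/2 := min_le_left _ _
        _ < δ := by linarith
    have := h hd
    have hT : T13 ⟨2 + ε, hx4⟩ = ⟨0, by norm_num⟩ := by
      simp only [T13]; rw [if_neg (show ¬((2:ℝ) + ε ≤ 2) by linarith)]
    have hT2 : T13 ⟨2, by norm_num⟩ = ⟨2, by norm_num⟩ := by simp [T13]
    rw [hT, hT2, Subtype.dist_eq, Real.dist_eq] at this
    norm_num at this
end
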